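/- Elementary expansion: let q be a finite-dimensional Lie algebra over ℂ, let I be a Lie ideal of q of codimension 1, and let x ∈ q with x ∉ I. Then there exist a finite-dimensional Lie algebra q' with dim q' = dim q + 1, an injective Lie algebra homomorphism φ : q → q', and elements y, z ∈ q' such that: q' is spanned by y, z and φ(I); [y,z] = 0; φ(x) = y + z; the operator u ↦ [y,u] preserves φ(I) and acts on it as a semisimple (diagonalizable) endomorphism; the operator u ↦ [z,u] preserves φ(I) and acts on it as a nilpotent endomorphism; for u, v ∈ I, [φ(u), φ(v)] = φ([u,v]); and the derived algebra satisfies [q',q'] = φ([q,q]). -/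

import Mathlib

open Module

/-- An endomorphism of a complex vector space is diagonalizable (semisimple) if its
eigenspaces span the whole space. -/
def IsDiagonalizable {V : Type*} [AddCommGroup V] [Module ℂ V] (f : Module.End ℂ V) : Prop :=
  (⨆ μ : ℂ, f.eigenspace μ) = ⊤

section Helpers

variable {V W : Type*} [AddCommGroup V] [Module ℂ V] [AddCommGroup W] [Module ℂ W]

lemma conj_pow_aux (f : Module.End ℂ V) (g : Module.End ℂ W) (σ : V ≃ₗ[ℂ] W)
    (h : ∀ v, g (σ v) = σ (f v)) : ∀ (n : ℕ) (v : V), (g ^ n) (σ v) = σ ((f ^ n) v) := by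
  intro n
  induction n with
  | zero => intro v; simp
  | succ n ih =>
    intro v
    rw [pow_succ', pow_succ', Module.End.mul_apply, Module.End.mul_apply, ih, h]

lemma isNilpotent_of_conj {f : Module.End ℂ V} {g : Module.End ℂ W} (σ : V ≃ₗ[ℂ] W)
    (h : ∀ v, g (σ v) = σ (f v)) (hf : IsNilpotent f) : IsNilpotent g := by
  obtain ⟨n, hn⟩ := hf
  refine ⟨n, ?_⟩
  ext w
  obtain ⟨v, rfl⟩ := σ.surjective w
  rw [conj_pow_aux f g σ h n v, hn]
  simp

lemma isDiagonalizable_of_conj {f : Module.End ℂ V} {g : Module.End ℂ W} (σ : V ≃ₗ[ℂ] W)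
    (h : ∀ v, g (σ v) = σ (f v)) (hf : IsDiagonalizable f) : IsDiagonalizable g := by
  rw [IsDiagonalizable, eq_top_iff]
  have : (⊤ : Submodule ℂ W) = Submodule.map σ.toLinearMap (⨆ μ : ℂ, f.eigenspace μ) := by
    rw [hf, Submodule.map_top, LinearEquiv.range]
  rw [this, Submodule.map_iSup]
  refine iSup_le fun μ => ?_
  refine le_trans ?_ (le_iSup _ μ)
  rintro w ⟨v, hv, rfl⟩
  have hv' : f v = μ • v := Module.End.mem_eigenspace_iff.mp hv
  rw [Module.End.mem_eigenspace_iff]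
  show g (σ v) = μ • σ v
  rw [h, hv', map_smul]

lemma isDiagonalizable_of_isFinitelySemisimple [FiniteDimensional ℂ V] (f : Module.End ℂ V)
    (h : f.IsFinitelySemisimple) : IsDiagonalizable f := by
  rw [IsDiagonalizable]
  simp only [← h.maxGenEigenspace_eq_eigenspace]
  exact Module.End.iSup_maxGenEigenspace_eq_top f

/-- The semisimple part of `ad x` is a derivation. -/
lemma semisimplePart_derivation {L : Type*} [LieRing L] [LieAlgebra ℂ L]
    [FiniteDimensional ℂ L] (x : L) (S : Module.End ℂ L)
    (hcomm : Commute (LieAlgebra.ad ℂ L x) S)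
    (hss : S.IsFinitelySemisimple)
    (hnil : IsNilpotent (LieAlgebra.ad ℂ L x - S)) :
    ∀ u v : L, S ⁅u, v⁆ = ⁅S u, v⁆ + ⁅u, S v⁆ := by
  set D : Module.End ℂ L := LieAlgebra.ad ℂ L x with hD
  have htoEnd : LieModule.toEnd ℂ L L x = D := by
    ext v; simp [hD, LieModule.toEnd_apply_apply, LieAlgebra.ad_apply]
  have key : ∀ (μ : ℂ) (u : L), u ∈ D.maxGenEigenspace μ → S u = μ • u := fun μ u hu =>
    Module.End.apply_eq_of_mem_of_comm_of_isFinitelySemisimple_of_isNil hu hcomm hss hnil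
  have hlie : ∀ (μ ν : ℂ) (u v : L), u ∈ D.maxGenEigenspace μ → v ∈ D.maxGenEigenspace ν →
      ⁅u, v⁆ ∈ D.maxGenEigenspace (μ + ν) := by
    intro μ ν u v hu hv
    have := LieModule.lie_mem_maxGenEigenspace_toEnd (R := ℂ) (L := L) (M := L)
      (χ₁ := μ) (χ₂ := ν) (x := x) (by rwa [htoEnd]) (by rwa [htoEnd])
    rwa [htoEnd] at this
  have base : ∀ (μ ν : ℂ) (u v : L), u ∈ D.maxGenEigenspace μ → v ∈ D.maxGenEigenspace ν →
      S ⁅u, v⁆ = ⁅S u, v⁆ + ⁅u, S v⁆ := by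
    intro μ ν u v hu hv
    rw [key μ u hu, key ν v hv, key (μ + ν) _ (hlie μ ν u v hu hv), smul_lie, lie_smul,
      add_smul]
  have htop : ∀ w : L, w ∈ ⨆ μ : ℂ, D.maxGenEigenspace μ := by
    intro w
    rw [Module.End.iSup_maxGenEigenspace_eq_top]
    trivial
  intro u v
  induction htop u using Submodule.iSup_induction' with
  | mem μ u hu =>
    induction htop v using Submodule.iSup_induction' with
    | mem ν v hv => exact base μ ν u v hu hv
    | zero => simp
    | add v₁ v₂ _ _ h₁ h₂ => simp only [lie_add, map_add, h₁, h₂]; abel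
  | zero => simp
  | add u₁ u₂ _ _ h₁ h₂ => simp only [add_lie, map_add, h₁, h₂]; abel

end Helpers

noncomputable section Ext
variable (L : Type*) [LieRing L] [LieAlgebra ℂ L]

def MyExt : Type _ := L × ℂ

instance : AddCommGroup (MyExt L) := inferInstanceAs (AddCommGroup (L × ℂ))
instance : Module ℂ (MyExt L) := inferInstanceAs (Module ℂ (L × ℂ))
instance [FiniteDimensional ℂ L] : FiniteDimensional ℂ (MyExt L) :=
  inferInstanceAs (FiniteDimensional ℂ (L × ℂ))

def MyExt.prodEquiv : MyExt L ≃ₗ[ℂ] L × ℂ := LinearEquiv.refl ℂ (L × ℂ)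

variable {L}

set_option linter.unusedSectionVars false

@[simp] lemma MyExt.fst_add (w₁ w₂ : MyExt L) : (w₁ + w₂).1 = w₁.1 + w₂.1 := rfl
@[simp] lemma MyExt.snd_add (w₁ w₂ : MyExt L) : (w₁ + w₂).2 = w₁.2 + w₂.2 := rfl
@[simp] lemma MyExt.fst_smul (c : ℂ) (w : MyExt L) : (c • w).1 = c • w.1 := rfl
@[simp] lemma MyExt.snd_smul (c : ℂ) (w : MyExt L) : (c • w).2 = c • w.2 := rfl

lemma MyExt.pair_add (a b : L) (c d : ℂ) :
    ((a, c) : MyExt L) + ((b, d) : MyExt L) = ((a + b, c + d) : MyExt L) := rfl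

lemma MyExt.ext {w₁ w₂ : MyExt L} (h1 : w₁.1 = w₂.1) (h2 : w₁.2 = w₂.2) : w₁ = w₂ :=
  Prod.ext h1 h2

def MyExt.mk (a : L) (c : ℂ) : MyExt L := (a, c)

@[simp] lemma MyExt.mk_fst (a : L) (c : ℂ) : (MyExt.mk a c).1 = a := rfl
@[simp] lemma MyExt.mk_snd (a : L) (c : ℂ) : (MyExt.mk a c).2 = c := rfl

@[reducible]
def extLieRing (N : Module.End ℂ L) (hN : ∀ u v : L, N ⁅u, v⁆ = ⁅N u, v⁆ + ⁅u, N v⁆) :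
    LieRing (MyExt L) :=
  { (inferInstance : AddCommGroup (MyExt L)) with
    bracket := fun w₁ w₂ =>
      ((⁅w₁.1, w₂.1⁆ + w₁.2 • N w₂.1 - w₂.2 • N w₁.1 : L), (0 : ℂ))
    add_lie := by
      rintro ⟨u₁, a₁⟩ ⟨u₂, a₂⟩ ⟨u₃, a₃⟩
      refine MyExt.ext ?_ (by exact (add_zero (0:ℂ)).symm)
      show (⁅u₁ + u₂, u₃⁆ + (a₁ + a₂) • N u₃ - a₃ • N (u₁ + u₂) : L) =
        (⁅u₁, u₃⁆ + a₁ • N u₃ - a₃ • N u₁) + (⁅u₂, u₃⁆ + a₂ • N u₃ - a₃ • N u₂)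
      simp only [add_lie, map_add, add_smul, smul_add, MyExt.fst_add]
      module
    lie_add := by
      rintro ⟨u₁, a₁⟩ ⟨u₂, a₂⟩ ⟨u₃, a₃⟩
      refine MyExt.ext ?_ (by exact (add_zero (0:ℂ)).symm)
      show (⁅u₁, u₂ + u₃⁆ + a₁ • N (u₂ + u₃) - (a₂ + a₃) • N u₁ : L) =
        (⁅u₁, u₂⁆ + a₁ • N u₂ - a₂ • N u₁) + (⁅u₁, u₃⁆ + a₁ • N u₃ - a₃ • N u₁)
      simp only [lie_add, map_add, add_smul, smul_add, MyExt.fst_add]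
      module
    lie_self := by
      rintro ⟨u, a⟩
      refine MyExt.ext ?_ rfl
      show (⁅u, u⁆ + a • N u - a • N u : L) = (0 : MyExt L).1
      simp; rfl
    leibniz_lie := by
      rintro ⟨u₁, a₁⟩ ⟨u₂, a₂⟩ ⟨u₃, a₃⟩
      refine MyExt.ext ?_ (by exact (add_zero (0:ℂ)).symm)
      show (⁅u₁, ⁅u₂, u₃⁆ + a₂ • N u₃ - a₃ • N u₂⁆
          + a₁ • N (⁅u₂, u₃⁆ + a₂ • N u₃ - a₃ • N u₂) - (0:ℂ) • N u₁ : L)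
        = (⁅⁅u₁, u₂⁆ + a₁ • N u₂ - a₂ • N u₁, u₃⁆ + (0:ℂ) • N u₃
            - a₃ • N (⁅u₁, u₂⁆ + a₁ • N u₂ - a₂ • N u₁))
        + (⁅u₂, ⁅u₁, u₃⁆ + a₁ • N u₃ - a₃ • N u₁⁆
            + a₂ • N (⁅u₁, u₃⁆ + a₁ • N u₃ - a₃ • N u₁) - (0:ℂ) • N u₂)
      simp only [lie_add, add_lie, lie_sub, sub_lie, lie_smul, smul_lie, map_add, map_sub,
        map_smul, hN, smul_add, smul_sub, smul_smul, zero_smul, lie_lie]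
      rw [← lie_skew u₂ (N u₁)]
      module
  }

@[reducible]
def extLieAlgebra (N : Module.End ℂ L) (hN : ∀ u v : L, N ⁅u, v⁆ = ⁅N u, v⁆ + ⁅u, N v⁆) :
    @LieAlgebra ℂ (MyExt L) _ (extLieRing N hN) :=
  letI : LieRing (MyExt L) := extLieRing N hN
  { (inferInstance : Module ℂ (MyExt L)) with
    lie_smul := by
      rintro t ⟨u₁, a₁⟩ ⟨u₂, a₂⟩
      refine MyExt.ext ?_ (by show (0:ℂ) = t • (0:ℂ); simp)
      show (⁅u₁, t • u₂⁆ + a₁ • N (t • u₂) - (t • a₂) • N u₁ : L)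
          = t • (⁅u₁, u₂⁆ + a₁ • N u₂ - a₂ • N u₁ : L)
      simp [lie_smul, smul_smul, smul_sub, smul_add, smul_eq_mul, mul_comm] }

end Ext

noncomputable section ShrinkLie

variable (L : Type*) [LieRing L] [LieAlgebra ℂ L] [Small.{0} L]

@[reducible]
def shrinkLieRing : LieRing (Shrink.{0} L) :=
  let e := ((Shrink.linearEquiv ℂ L).symm : L ≃ₗ[ℂ] Shrink.{0} L)
  { (inferInstance : AddCommGroup (Shrink.{0} L)) with
    bracket := fun a b => e ⁅e.symm a, e.symm b⁆
    add_lie := by intro a b c; simp [lie_add, add_lie]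
    lie_add := by intro a b c; simp [lie_add]
    lie_self := by intro a; simp
    leibniz_lie := by intro a b c; simp [← map_add] }

@[reducible]
def shrinkLieAlgebra : @LieAlgebra ℂ (Shrink.{0} L) _ (shrinkLieRing L) :=
  letI := shrinkLieRing L
  { (inferInstance : Module ℂ (Shrink.{0} L)) with
    lie_smul := by
      intro t x y
      show (((Shrink.linearEquiv ℂ L).symm : L ≃ₗ[ℂ] Shrink.{0} L)) ⁅_, (((Shrink.linearEquiv ℂ L).symm : L ≃ₗ[ℂ] Shrink.{0} L)).symm (t • y)⁆ = _
      rw [map_smul, lie_smul, map_smul]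
      rfl }

def shrinkLieEquiv : @LieEquiv ℂ L (Shrink.{0} L) _ _ _ (shrinkLieRing L)
    (shrinkLieAlgebra L) :=
  letI := shrinkLieRing L
  letI := shrinkLieAlgebra L
  { ((Shrink.linearEquiv ℂ L).symm : L ≃ₗ[ℂ] Shrink.{0} L) with
    map_lie' := by
      intro x y
      show (((Shrink.linearEquiv ℂ L).symm : L ≃ₗ[ℂ] Shrink.{0} L)) ⁅x, y⁆
          = (((Shrink.linearEquiv ℂ L).symm : L ≃ₗ[ℂ] Shrink.{0} L)) ⁅(((Shrink.linearEquiv ℂ L).symm : L ≃ₗ[ℂ] Shrink.{0} L)).symm _,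
              (((Shrink.linearEquiv ℂ L).symm : L ≃ₗ[ℂ] Shrink.{0} L)).symm _⁆
      simp }

end ShrinkLie

/-- **Elementary expansion**: given a codimension-one ideal `I` of a finite-dimensional
complex Lie algebra `q` and `x ∉ I`, there is a Lie algebra `q'` of dimension
`dim q + 1`, an embedding `φ : q → q'` and elements `y, z ∈ q'` spanning `q'` together
with `φ(I)`, such that `[y,z] = 0`, `φ(x) = y + z`, `ad y` preserves `φ(I)` and is
semisimple there, `ad z` preserves `φ(I)` and is nilpotent there, `φ` preserves the
bracket on `I`, and `[q',q'] = φ([q,q])`. -/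
theorem elementary_expansion
    (q : Type*) [LieRing q] [LieAlgebra ℂ q] [FiniteDimensional ℂ q]
    (I : LieIdeal ℂ q) (hI : Module.finrank ℂ (q ⧸ I) = 1)
    (x : q) (hx : x ∉ I) :
    ∃ (q' : Type) (_ : LieRing q') (_ : LieAlgebra ℂ q') (_ : FiniteDimensional ℂ q')
      (φ : q →ₗ⁅ℂ⁆ q') (y z : q'),
      Function.Injective φ ∧
      Module.finrank ℂ q' = Module.finrank ℂ q + 1 ∧
      Submodule.span ℂ ({y, z} ∪ φ '' (I : Set q)) = ⊤ ∧
      ⁅y, z⁆ = 0 ∧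
      φ x = y + z ∧
      (∃ hy : ∀ w ∈ (I : Submodule ℂ q).map φ.toLinearMap,
          (LieAlgebra.ad ℂ q' y) w ∈ (I : Submodule ℂ q).map φ.toLinearMap,
        IsDiagonalizable ((LieAlgebra.ad ℂ q' y).restrict hy)) ∧
      (∃ hz : ∀ w ∈ (I : Submodule ℂ q).map φ.toLinearMap,
          (LieAlgebra.ad ℂ q' z) w ∈ (I : Submodule ℂ q).map φ.toLinearMap,
        IsNilpotent ((LieAlgebra.ad ℂ q' z).restrict hz)) ∧
      (∀ u ∈ I, ∀ v ∈ I, ⁅φ u, φ v⁆ = φ ⁅u, v⁆) ∧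
      ⁅(⊤ : LieIdeal ℂ q'), (⊤ : LieIdeal ℂ q')⁆ =
        LieIdeal.map φ ⁅(⊤ : LieIdeal ℂ q), (⊤ : LieIdeal ℂ q)⁆ := by
  classical
  have hx0 : x ≠ 0 := fun h => hx (h ▸ I.zero_mem)
  set D : Module.End ℂ q := LieAlgebra.ad ℂ q x with hDdef
  obtain ⟨Nn, hNmem, S, hSmem, hNnnil, hSss, hDNS⟩ :=
    Module.End.exists_isNilpotent_isSemisimple (f := D)
  set N : Module.End ℂ q := D - S with hNdef
  have hNeq : N = Nn := by rw [hNdef, hDNS]; abel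
  have hNnil : IsNilpotent N := hNeq ▸ hNnnil
  have hcomm : Commute D S := Algebra.commute_of_mem_adjoin_self hSmem
  have hSfs : S.IsFinitelySemisimple := hSss.isFinitelySemisimple
  have hnilDS : IsNilpotent (LieAlgebra.ad ℂ q x - S) := by rwa [← hDdef, ← hNdef]
  have hSder : ∀ u v : q, S ⁅u, v⁆ = ⁅S u, v⁆ + ⁅u, S v⁆ :=
    semisimplePart_derivation x S hcomm hSfs hnilDS
  have hDapp : ∀ v : q, D v = ⁅x, v⁆ := fun v => rfl
  have hNder : ∀ u v : q, N ⁅u, v⁆ = ⁅N u, v⁆ + ⁅u, N v⁆ := by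
    intro u v
    have hDder : D ⁅u, v⁆ = ⁅D u, v⁆ + ⁅u, D v⁆ := by
      simp only [hDapp]
      exact leibniz_lie x u v
    simp only [hNdef, LinearMap.sub_apply, hDder, hSder u v, sub_lie, lie_sub]
    abel
  have hDx : D x = 0 := by simp [hDapp]
  have hSx : S x = 0 := by
    have hxmem : x ∈ D.maxGenEigenspace 0 := by
      rw [Module.End.mem_maxGenEigenspace]
      exact ⟨1, by simpa using hDx⟩
    have := Module.End.apply_eq_of_mem_of_comm_of_isFinitelySemisimple_of_isNil hxmem hcomm hSfs
      (by rwa [← hNdef])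
    simpa using this
  have hNx : N x = 0 := by simp [hNdef, LinearMap.sub_apply, hDx, hSx]
  -- S is a polynomial in D
  obtain ⟨p, hp⟩ : ∃ p : Polynomial ℂ, Polynomial.aeval D p = S := by
    rw [Algebra.adjoin_singleton_eq_range_aeval] at hSmem
    exact hSmem
  have hSapp : ∀ v : q, S v =
      ∑ i ∈ Finset.range (p.natDegree + 1), p.coeff i • (D ^ i) v := by
    intro v
    rw [← hp, Polynomial.aeval_eq_sum_range]
    simp [LinearMap.sum_apply, LinearMap.smul_apply]
  have hDpowx : ∀ i : ℕ, 1 ≤ i → (D ^ i) x = 0 := by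
    intro i hi
    obtain ⟨k, rfl⟩ := Nat.exists_eq_add_of_le hi
    rw [add_comm, pow_succ, Module.End.mul_apply, hDx, map_zero]
  have hc0 : p.coeff 0 = 0 := by
    have h1 : S x = p.coeff 0 • x := by
      rw [hSapp x, Finset.sum_eq_single 0]
      · simp
      · intro i _ hi
        rw [hDpowx i (Nat.one_le_iff_ne_zero.mpr hi), smul_zero]
      · intro h; exact absurd (Finset.mem_range.mpr (Nat.succ_pos _)) h
    rw [hSx] at h1
    rcases smul_eq_zero.mp h1.symm with h | h
    · exact h
    · exact absurd h hx0
  -- membership facts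
  have hII : ∀ u, u ∈ I → ∀ (i : ℕ), (D ^ i) u ∈ I := by
    intro u hu i
    induction i with
    | zero => simpa using hu
    | succ n ih =>
      rw [pow_succ']
      rw [Module.End.mul_apply]
      have : D ((D ^ n) u) = ⁅x, (D ^ n) u⁆ := hDapp _
      rw [this]
      exact I.lie_mem ih
  have hSI : ∀ u, u ∈ I → S u ∈ I := by
    intro u hu
    rw [hSapp u]
    refine Submodule.sum_mem (I : Submodule ℂ q) fun i _ => Submodule.smul_mem _ _ ?_
    exact hII u hu i
  have hNI : ∀ u, u ∈ I → N u ∈ I := by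
    intro u hu
    rw [hNdef, LinearMap.sub_apply]
    refine Submodule.sub_mem (I : Submodule ℂ q) ?_ ?_
    · rw [hDapp]; exact I.lie_mem hu
    · exact hSI u hu
  -- derived algebra membership
  set Dq : LieIdeal ℂ q := ⁅(⊤ : LieIdeal ℂ q), (⊤ : LieIdeal ℂ q)⁆ with hDq
  have hbrDq : ∀ u v : q, ⁅u, v⁆ ∈ Dq := fun u v =>
    LieSubmodule.lie_mem_lie trivial trivial
  have hSDq : ∀ v : q, S v ∈ Dq := by
    intro v
    rw [hSapp v]
    refine Submodule.sum_mem (Dq : Submodule ℂ q) fun i hmem => ?_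
    clear hmem
    rcases Nat.eq_zero_or_pos i with rfl | hi
    · rw [hc0]; simp
    · refine Submodule.smul_mem _ _ ?_
      obtain ⟨k, rfl⟩ := Nat.exists_eq_add_of_le hi
      rw [add_comm, pow_succ, Module.End.mul_apply]
      have hbase : D v ∈ Dq := by rw [hDapp]; exact hbrDq x v
      clear hi
      induction k with
      | zero => simpa using hbase
      | succ n ih =>
        rw [pow_succ', Module.End.mul_apply]
        rw [hDapp]
        exact Dq.lie_mem ih
  have hNDq : ∀ v : q, N v ∈ Dq := by
    intro v
    rw [hNdef, LinearMap.sub_apply]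
    exact Submodule.sub_mem (Dq : Submodule ℂ q) (by rw [hDapp]; exact hbrDq x v) (hSDq v)
  -- the decomposition of q
  have hsup : ∀ v : q, ∃ (u : q) (c : ℂ), u ∈ I ∧ v = u + c • x := by
    intro v
    have hxq : (LieSubmodule.Quotient.mk x : q ⧸ I) ≠ 0 := by
      rw [Ne, LieSubmodule.Quotient.mk_eq_zero']
      exact hx
    have hspan : Submodule.span ℂ {(LieSubmodule.Quotient.mk x : q ⧸ I)} = ⊤ :=
      (finrank_eq_one_iff_of_nonzero _ hxq).mp hI
    have hvmem : (LieSubmodule.Quotient.mk v : q ⧸ I) ∈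
        Submodule.span ℂ {(LieSubmodule.Quotient.mk x : q ⧸ I)} := by
      rw [hspan]; trivial
    obtain ⟨c, hc⟩ := Submodule.mem_span_singleton.mp hvmem
    refine ⟨v - c • x, c, ?_, by abel⟩
    rw [← LieSubmodule.Quotient.mk_eq_zero' (N := I)]
    show Submodule.Quotient.mk (v - c • x) = 0
    rw [Submodule.Quotient.mk_sub, Submodule.Quotient.mk_smul]
    rw [show (Submodule.Quotient.mk x : q ⧸ I.toSubmodule)
        = (LieSubmodule.Quotient.mk x : q ⧸ I) from rfl]
    rw [hc]
    exact sub_self _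
  -- build the extension
  letI lri : LieRing (MyExt q) := extLieRing N hNder
  letI lal : LieAlgebra ℂ (MyExt q) := extLieAlgebra N hNder
  haveI hsmall : Small.{0} (MyExt q) :=
    small_of_injective (Basis.equivFun (Module.finBasis ℂ (MyExt q))).injective
  letI lri' : LieRing (Shrink.{0} (MyExt q)) := shrinkLieRing (MyExt q)
  letI lal' : LieAlgebra ℂ (Shrink.{0} (MyExt q)) := shrinkLieAlgebra (MyExt q)
  haveI hfd' : FiniteDimensional ℂ (Shrink.{0} (MyExt q)) :=
    Module.Finite.equiv (((Shrink.linearEquiv ℂ (MyExt q)).symm : MyExt q ≃ₗ[ℂ] Shrink.{0} (MyExt q)))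
  set e : MyExt q ≃ₗ⁅ℂ⁆ Shrink.{0} (MyExt q) := shrinkLieEquiv (MyExt q) with he
  have fst_add' : ∀ w₁ w₂ : MyExt q, (w₁ + w₂).1 = w₁.1 + w₂.1 := fun _ _ => rfl
  have snd_add' : ∀ w₁ w₂ : MyExt q, (w₁ + w₂).2 = w₁.2 + w₂.2 := fun _ _ => rfl
  have fst_smul' : ∀ (c : ℂ) (w : MyExt q), (c • w).1 = c • w.1 := fun _ _ => rfl
  have snd_smul' : ∀ (c : ℂ) (w : MyExt q), (c • w).2 = c • w.2 := fun _ _ => rfl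
  have hbr : ∀ (u v : q) (a b : ℂ),
      (⁅MyExt.mk u a, MyExt.mk v b⁆ : MyExt q)
        = MyExt.mk (⁅u, v⁆ + a • N v - b • N u) 0 := fun _ _ _ _ => rfl
  set φ₀ : q →ₗ⁅ℂ⁆ MyExt q :=
    { toFun := fun u => MyExt.mk u 0
      map_add' := by intro u v; exact MyExt.ext rfl (by simp)
      map_smul' := by intro c u; exact MyExt.ext rfl (by simp)
      map_lie' := by
        intro u v
        rw [hbr]
        exact MyExt.ext (by simp) rfl } with hφ₀
  set φ : q →ₗ⁅ℂ⁆ Shrink.{0} (MyExt q) := LieHom.comp (e : MyExt q →ₗ⁅ℂ⁆ Shrink.{0} (MyExt q)) φ₀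
    with hφ
  have φdef : ∀ u : q, φ u = e (MyExt.mk u 0) := fun u => rfl
  set y : Shrink.{0} (MyExt q) := e (MyExt.mk x (-1)) with hy
  set z : Shrink.{0} (MyExt q) := e (MyExt.mk 0 1) with hz
  have hmaplie : ∀ w₁ w₂ : MyExt q, ⁅e w₁, e w₂⁆ = e ⁅w₁, w₂⁆ := by
    intro w₁ w₂
    exact (e.toLieHom.map_lie w₁ w₂).symm
  -- key bracket computations
  have hyz : (⁅y, z⁆ : Shrink.{0} (MyExt q)) = 0 := by
    rw [hy, hz, hmaplie, hbr]
    have h1 : MyExt.mk (⁅x, (0:q)⁆ + (-1 : ℂ) • N 0 - (1:ℂ) • N x) 0 = (0 : MyExt q) := by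
      refine MyExt.ext ?_ rfl
      show ⁅x, (0:q)⁆ + (-1 : ℂ) • N 0 - (1:ℂ) • N x = 0
      simp [hNx]
    rw [h1]
    exact map_zero e.toLinearEquiv
  have hxyz : φ x = y + z := by
    have hpair : MyExt.mk x (-1) + MyExt.mk (0:q) 1 = MyExt.mk x 0 :=
      MyExt.ext (by simp [fst_add']) (by simp [snd_add'])
    rw [φdef, hy, hz, ← hpair]
    exact map_add e.toLinearEquiv _ _
  have hady : ∀ v : q, ⁅y, φ v⁆ = φ (S v) := by
    intro v
    rw [hy, φdef, hmaplie, hbr, φdef]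
    congr 1
    refine MyExt.ext ?_ rfl
    show ⁅x, v⁆ + (-1 : ℂ) • N v - (0:ℂ) • N x = S v
    have hNv : N v = ⁅x, v⁆ - S v := rfl
    rw [hNv]
    module
  have hadz : ∀ v : q, ⁅z, φ v⁆ = φ (N v) := by
    intro v
    rw [hz, φdef, hmaplie, hbr, φdef]
    congr 1
    refine MyExt.ext ?_ rfl
    show ⁅(0:q), v⁆ + (1 : ℂ) • N v - (0:ℂ) • N 0 = N v
    simp
  have hφinj : Function.Injective φ := by
    intro a b hab
    rw [φdef, φdef] at hab
    have := e.toLinearEquiv.injective hab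
    exact congrArg Prod.fst this
  refine ⟨Shrink.{0} (MyExt q), lri', lal', hfd',
    φ, y, z, hφinj, ?_, ?_, hyz, hxyz, ?_, ?_, ?_, ?_⟩
  · -- finrank
    rw [(((Shrink.linearEquiv ℂ (MyExt q)).symm : MyExt q ≃ₗ[ℂ] Shrink.{0} (MyExt q))).symm.finrank_eq]
    rw [(MyExt.prodEquiv q).finrank_eq, Module.finrank_prod, Module.finrank_self]
  · -- span
    rw [eq_top_iff]
    rintro w -
    set P := Submodule.span ℂ (({y, z} : Set (Shrink.{0} (MyExt q))) ∪ φ '' (I : Set q)) with hP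
    have hyP : y ∈ P := Submodule.subset_span (Or.inl (by simp))
    have hzP : z ∈ P := Submodule.subset_span (Or.inl (by simp))
    have hφI : ∀ u, u ∈ I → φ u ∈ P := fun u hu =>
      Submodule.subset_span (Or.inr ⟨u, hu, rfl⟩)
    have hφx : φ x ∈ P := by rw [hxyz]; exact Submodule.add_mem _ hyP hzP
    have hφall : ∀ v : q, φ v ∈ P := by
      intro v
      obtain ⟨u, c, hu, rfl⟩ := hsup v
      rw [map_add, map_smul]
      exact Submodule.add_mem _ (hφI u hu) (Submodule.smul_mem _ _ hφx)
    obtain ⟨w', rfl⟩ := e.toLinearEquiv.surjective w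
    obtain ⟨v, c⟩ := w'
    have hsplit : @Eq (MyExt q) (v, c) (MyExt.mk v 0 + c • MyExt.mk 0 1) :=
      MyExt.ext (by show v = v + c • 0; simp) (by show c = 0 + c • 1; simp)
    rw [hsplit, map_add, map_smul]
    refine Submodule.add_mem _ (hφall v) (Submodule.smul_mem _ _ ?_)
    exact hzP
  · -- ad y diagonalizable on φ(I)
    have hyP : ∀ w ∈ (I : Submodule ℂ q).map φ.toLinearMap,
        (LieAlgebra.ad ℂ (Shrink.{0} (MyExt q)) y) w ∈ (I : Submodule ℂ q).map φ.toLinearMap := by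
      rintro w ⟨u, hu, rfl⟩
      refine ⟨S u, ?_, ?_⟩
      · exact hSI u hu
      · show φ (S u) = LieAlgebra.ad ℂ (Shrink.{0} (MyExt q)) y (φ u)
        rw [LieAlgebra.ad_apply, hady u]
    refine ⟨hyP, ?_⟩
    have hSmapsto : ∀ u ∈ (I : Submodule ℂ q), S u ∈ (I : Submodule ℂ q) := fun u hu => hSI u hu
    have hSinvt : (I : Submodule ℂ q) ∈ S.invtSubmodule :=
      (Module.End.mem_invtSubmodule S).mpr fun u hu => hSI u hu
    have hfdiag : IsDiagonalizable (S.restrict hSmapsto) :=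
      isDiagonalizable_of_isFinitelySemisimple _ (hSfs.restrict hSinvt)
    set σ := Submodule.equivMapOfInjective φ.toLinearMap hφinj (I : Submodule ℂ q) with hσ
    refine isDiagonalizable_of_conj σ ?_ hfdiag
    intro v
    apply Subtype.ext
    show LieAlgebra.ad ℂ (Shrink.{0} (MyExt q)) y ((σ v : Shrink.{0} (MyExt q)))
        = (φ.toLinearMap (S.restrict hSmapsto v : q) : Shrink.{0} (MyExt q))
    rw [LieAlgebra.ad_apply]
    have h1 : ((σ v : Shrink.{0} (MyExt q))) = φ (v : q) :=
      Submodule.coe_equivMapOfInjective_apply _ _ _ _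
    have h2 : ((S.restrict hSmapsto v : q)) = S (v : q) := rfl
    rw [h1, h2, hady]
    rfl
  · -- ad z nilpotent on φ(I)
    have hzP : ∀ w ∈ (I : Submodule ℂ q).map φ.toLinearMap,
        (LieAlgebra.ad ℂ (Shrink.{0} (MyExt q)) z) w ∈ (I : Submodule ℂ q).map φ.toLinearMap := by
      rintro w ⟨u, hu, rfl⟩
      refine ⟨N u, ?_, ?_⟩
      · exact hNI u hu
      · show φ (N u) = LieAlgebra.ad ℂ (Shrink.{0} (MyExt q)) z (φ u)
        rw [LieAlgebra.ad_apply, hadz u]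
    refine ⟨hzP, ?_⟩
    have hNmapsto : ∀ u ∈ (I : Submodule ℂ q), N u ∈ (I : Submodule ℂ q) := fun u hu => hNI u hu
    have hfnil : IsNilpotent (N.restrict hNmapsto) :=
      Module.End.isNilpotent.restrict hNmapsto hNnil
    set σ := Submodule.equivMapOfInjective φ.toLinearMap hφinj (I : Submodule ℂ q) with hσ
    refine isNilpotent_of_conj σ ?_ hfnil
    intro v
    apply Subtype.ext
    show LieAlgebra.ad ℂ (Shrink.{0} (MyExt q)) z ((σ v : Shrink.{0} (MyExt q)))
        = (φ.toLinearMap (N.restrict hNmapsto v : q) : Shrink.{0} (MyExt q))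
    rw [LieAlgebra.ad_apply]
    have h1 : ((σ v : Shrink.{0} (MyExt q))) = φ (v : q) :=
      Submodule.coe_equivMapOfInjective_apply _ _ _ _
    have h2 : ((N.restrict hNmapsto v : q)) = N (v : q) := rfl
    rw [h1, h2, hadz]
    rfl
  · -- brackets preserved
    intro u _ v _
    exact (φ.map_lie u v).symm
  · -- derived algebra
    have hbr' : ∀ w₁ w₂ : MyExt q, (⁅w₁, w₂⁆ : MyExt q)
        = MyExt.mk (⁅w₁.1, w₂.1⁆ + w₁.2 • N w₂.1 - w₂.2 • N w₁.1) 0 := fun _ _ => rfl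
    apply le_antisymm
    · rw [LieSubmodule.lieIdeal_oper_eq_span, LieSubmodule.lieSpan_le]
      rintro w ⟨a, b, rfl⟩
      have ha : (a : Shrink.{0} (MyExt q)) = e (e.toLinearEquiv.symm (a : Shrink.{0} (MyExt q))) :=
        (e.toLinearEquiv.apply_symm_apply _).symm
      have hb : (b : Shrink.{0} (MyExt q)) = e (e.toLinearEquiv.symm (b : Shrink.{0} (MyExt q))) :=
        (e.toLinearEquiv.apply_symm_apply _).symm
      rw [SetLike.mem_coe, ha, hb, hmaplie, hbr']
      set w₁ := e.toLinearEquiv.symm (a : Shrink.{0} (MyExt q))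
      set w₂ := e.toLinearEquiv.symm (b : Shrink.{0} (MyExt q))
      have hcmem : ⁅w₁.1, w₂.1⁆ + w₁.2 • N w₂.1 - w₂.2 • N w₁.1 ∈ Dq := by
        refine Submodule.sub_mem (Dq : Submodule ℂ q) ?_ ?_
        · exact Submodule.add_mem (Dq : Submodule ℂ q) (hbrDq _ _)
            (Submodule.smul_mem _ _ (hNDq _))
        · exact Submodule.smul_mem _ _ (hNDq _)
      exact LieIdeal.mem_map hcmem
    · rw [LieIdeal.map_le]
      rintro w ⟨d, hd, rfl⟩
      have hd' : d ∈ LieSubmodule.toSubmodule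
          (⁅(⊤ : LieIdeal ℂ q), (⊤ : LieIdeal ℂ q)⁆ : LieIdeal ℂ q) := hd
      rw [LieSubmodule.lieIdeal_oper_eq_linear_span] at hd'
      show φ d ∈ ⁅(⊤ : LieIdeal ℂ (Shrink.{0} (MyExt q))), (⊤ : LieIdeal ℂ (Shrink.{0} (MyExt q)))⁆
      refine Submodule.span_induction ?_ ?_ ?_ ?_ hd'
      · rintro m ⟨a, b, rfl⟩
        rw [LieHom.map_lie]
        exact LieSubmodule.lie_mem_lie trivial trivial
      · rw [map_zero]
        exact zero_mem _
      · intro m₁ m₂ _ _ h₁ h₂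
        rw [map_add]
        exact add_mem h₁ h₂
      · intro c m _ h₁
        rw [map_smul]
        exact Submodule.smul_mem (LieSubmodule.toSubmodule
          (⁅(⊤ : LieIdeal ℂ (Shrink.{0} (MyExt q))), (⊤ : LieIdeal ℂ (Shrink.{0} (MyExt q)))⁆)) _ h₁
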